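/- Let α > 0, δ ≥ 0, λ > 0 and t > 0. Then λ · (1/Γ(α)) ∫₀ᵗ (t−τ)^{α−1} τ^{α+δ−1} E_{α,α+δ}(−λ τ^α) dτ = t^{α+δ−1} [ 1/Γ(α+δ) − E_{α,α+δ}(−λ t^α) ]; that is, λ I^α applied to τ ↦ τ^{α+δ−1} E_{α,α+δ}(−λ τ^α) equals t^{α+δ−1}(Γ(α+δ)^{−1} − E_{α,α+δ}(−λ t^α)). -/

import Mathlib

/-!
Expanding `E_{α,β}(μ τ^α)` into its power series and integrating term by term with the Beta
integral `I^α τ^{γ-1} = Γ(γ)/Γ(α+γ) t^{α+γ-1}` gives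
`I^α [τ^{β-1} E_{α,β}(μ τ^α)] = t^{α+β-1} E_{α,α+β}(μ t^α)`.
The interchange is justified since the same computation with `|μ|` yields a convergent series:
by log-convexity, `Γ(αk+β)` outgrows every geometric sequence.
The theorem then follows from the recurrence `E_{α,β}(z) = 1/Γ(β) + z E_{α,α+β}(z)`.
-/

/-- The Mittag-Leffler function `E_{α,β}(z) = ∑_{k=0}^∞ z^k / Γ(αk+β)`.
(In Lean, `Real.Gamma` vanishes at the poles of `Γ`, and division by zero is zero,
so the summand is interpreted as `0` there.) -/
noncomputable def mittagLeffler (α β z : ℝ) : ℝ :=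
  ∑' k : ℕ, z ^ k / Real.Gamma (α * k + β)

open Real Set MeasureTheory intervalIntegral Filter

namespace Real

theorem Gamma_mul_rpow_le_Gamma_add {x a : ℝ} (hx : 1 < x) (ha : 0 < a) :
    Gamma x * (x - 1) ^ a ≤ Gamma (x + a) := by
  -- `log Γ` has slope `log (x - 1)` on `[x - 1, x]`, so by convexity at least that on `[x, x + a]`
  have hx₁ : 0 < x - 1 := by linarith
  have hΓx : 0 < Gamma x := Gamma_pos_of_pos (by linarith)
  have hΓx₁ : 0 < Gamma (x - 1) := Gamma_pos_of_pos hx₁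
  have hslope := convexOn_log_Gamma.slope_mono_adjacent (x := x - 1) (y := x) (z := x + a)
    hx₁ (mem_Ioi.2 (by linarith)) (by linarith) (by linarith)
  have hrec : Gamma x = (x - 1) * Gamma (x - 1) := by
    simpa using Gamma_add_one hx₁.ne'
  simp only [Function.comp, sub_sub_cancel, div_one, add_sub_cancel_left, hrec,
    log_mul hx₁.ne' hΓx₁.ne', add_sub_cancel_right, le_div_iff₀ ha] at hslope
  have hpow : 0 < (x - 1) ^ a := rpow_pos_of_pos hx₁ a
  rw [← exp_log (mul_pos hΓx hpow), ← exp_log (Gamma_pos_of_pos (by linarith : 0 < x + a)),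
    exp_le_exp, log_mul hΓx.ne' hpow.ne', log_rpow hx₁, hrec, log_mul hx₁.ne' hΓx₁.ne']
  linarith

theorem rpow_mul_natCast_add {x : ℝ} (hx : 0 < x) (y z : ℝ) (k : ℕ) :
    x ^ (y * k + z) = x ^ z * (x ^ y) ^ k := by
  rw [rpow_add hx, rpow_mul_natCast hx.le, mul_comm]

end Real

theorem summable_pow_div_Gamma_mul_add {a : ℝ} (ha : 0 < a) (b z : ℝ) :
    Summable fun k : ℕ => z ^ k / Gamma (a * k + b) := by
  have hlin : Tendsto (fun k : ℕ => a * k + b - 1) atTop atTop :=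
    tendsto_atTop_add_const_right _ _ (tendsto_atTop_add_const_right _ _
      (tendsto_natCast_atTop_atTop.const_mul_atTop ha))
  refine summable_of_ratio_norm_eventually_le (r := 1 / 2) (by norm_num) ?_
  filter_upwards [hlin.eventually_gt_atTop 0,
    (tendsto_rpow_atTop ha |>.comp hlin).eventually_ge_atTop (2 * |z|)] with k hk hgrowth
  have hΓ : 0 < Gamma (a * k + b) := Gamma_pos_of_pos (by linarith)
  have hstep : 2 * |z| * Gamma (a * k + b) ≤ Gamma (a * ↑(k + 1) + b) := by
    rw [show a * ↑(k + 1) + b = a * k + b + a by push_cast; ring]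
    calc 2 * |z| * Gamma (a * k + b) ≤ Gamma (a * k + b) * (a * k + b - 1) ^ a := by
          rw [mul_comm]; exact mul_le_mul_of_nonneg_left hgrowth hΓ.le
      _ ≤ _ := Gamma_mul_rpow_le_Gamma_add (by linarith) ha
  have hΓ' : 0 < Gamma (a * ↑(k + 1) + b) := Gamma_pos_of_pos (by push_cast; nlinarith)
  rw [norm_div, norm_div, norm_of_nonneg hΓ.le, norm_of_nonneg hΓ'.le, norm_pow, norm_pow,
    div_le_iff₀ hΓ', pow_succ, Real.norm_eq_abs]
  calc |z| ^ k * |z|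
        = 1 / 2 * (|z| ^ k / Gamma (a * k + b)) * (2 * |z| * Gamma (a * k + b)) := by field_simp
    _ ≤ _ := by gcongr

theorem hasSum_mittagLeffler {α : ℝ} (hα : 0 < α) (β z : ℝ) :
    HasSum (fun k : ℕ => z ^ k / Gamma (α * k + β)) (mittagLeffler α β z) :=
  (summable_pow_div_Gamma_mul_add hα β z).hasSum

theorem mittagLeffler_eq_inv_Gamma_add_mul {α : ℝ} (hα : 0 < α) (β z : ℝ) :
    mittagLeffler α β z = (Gamma β)⁻¹ + z * mittagLeffler α (α + β) z := by
  rw [mittagLeffler, (summable_pow_div_Gamma_mul_add hα β z).tsum_eq_zero_add, mittagLeffler,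
    ← tsum_mul_left]
  congr 1
  · simp
  · congr 1 with k
    rw [pow_succ', mul_div_assoc]
    push_cast
    ring_nf

theorem intervalIntegrable_rpow_sub_mul_rpow {a b x : ℝ} (ha : 0 < a) (hb : 0 < b)
    (hx : 0 < x) : IntervalIntegrable (fun τ => (x - τ) ^ (a - 1) * τ ^ (b - 1)) volume 0 x := by
  set f : ℝ → ℝ := fun τ => (x - τ) ^ (a - 1) * τ ^ (b - 1)
  have hleft : IntervalIntegrable f volume 0 (x / 2) := by
    refine (intervalIntegrable_rpow' (by linarith)).continuousOn_mul
      (ContinuousOn.rpow_const (by fun_prop) fun τ hτ => Or.inl ?_)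
    rw [uIcc_of_le (by linarith)] at hτ
    linarith [hτ.2]
  have hright : IntervalIntegrable f volume (x / 2) x := by
    refine IntervalIntegrable.mul_continuousOn ?_
      (ContinuousOn.rpow_const (by fun_prop) fun τ hτ => Or.inl ?_)
    · have := (intervalIntegrable_rpow' (r := a - 1) (a := 0) (b := x / 2) (by linarith))
      simpa [show x - x / 2 = x / 2 by ring] using (this.comp_sub_left x).symm
    · rw [uIcc_of_le (by linarith)] at hτ
      linarith [hτ.1]
  exact hleft.trans hright

theorem integral_rpow_sub_mul_rpow {a b x : ℝ} (ha : 0 < a) (hb : 0 < b) (hx : 0 < x) :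
    ∫ τ in (0:ℝ)..x, (x - τ) ^ (a - 1) * τ ^ (b - 1)
      = Gamma a * Gamma b / Gamma (a + b) * x ^ (a + b - 1) := by
  apply Complex.ofReal_injective
  have hbeta := Complex.betaIntegral_scaled (b : ℂ) a hx
  rw [Complex.betaIntegral_eq_Gamma_mul_div _ _ (by simpa) (by simpa)] at hbeta
  rw [← intervalIntegral.integral_ofReal]
  calc _ = ∫ τ in (0:ℝ)..x, (τ : ℂ) ^ ((b : ℂ) - 1) * ((x : ℂ) - τ) ^ ((a : ℂ) - 1) := by
        refine integral_congr fun τ hτ => ?_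
        rw [uIcc_of_le hx.le] at hτ
        push_cast [Complex.ofReal_cpow hτ.1, Complex.ofReal_cpow (sub_nonneg.2 hτ.2)]
        ring
    _ = _ := by
        rw [hbeta]
        push_cast [Complex.ofReal_cpow hx.le]
        simp only [← Complex.Gamma_ofReal, Complex.ofReal_add]
        ring_nf

section RiemannLiouville

variable {α β t : ℝ}

theorem integral_rpow_sub_mul_rpow_mittagLeffler_term (hα : 0 < α) (hβ : 0 < β) (ht : 0 < t)
    (μ : ℝ) (k : ℕ) :
    ∫ τ in (0:ℝ)..t,
        μ ^ k / Gamma (α * k + β) * ((t - τ) ^ (α - 1) * τ ^ (α * k + β - 1))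
      = Gamma α * t ^ (α + β - 1) * ((μ * t ^ α) ^ k / Gamma (α * k + (α + β))) := by
  have hΓ : Gamma (α * k + β) ≠ 0 := (Gamma_pos_of_pos (by positivity)).ne'
  rw [intervalIntegral.integral_const_mul, integral_rpow_sub_mul_rpow hα (by positivity) ht,
    show α + (α * k + β) - 1 = α * k + (α + β - 1) by ring, rpow_mul_natCast_add ht,
    show α + (α * k + β) = α * k + (α + β) by ring, mul_pow]
  field_simp

theorem integral_rpow_sub_mul_rpow_mul_mittagLeffler (hα : 0 < α) (hβ : 0 < β) (ht : 0 < t)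
    (μ : ℝ) :
    ∫ τ in (0:ℝ)..t, (t - τ) ^ (α - 1) * (τ ^ (β - 1) * mittagLeffler α β (μ * τ ^ α))
      = Gamma α * t ^ (α + β - 1) * mittagLeffler α (α + β) (μ * t ^ α) := by
  set F : ℕ → ℝ → ℝ := fun k τ ↦
    μ ^ k / Gamma (α * k + β) * ((t - τ) ^ (α - 1) * τ ^ (α * k + β - 1))
  have hF_int (k : ℕ) : Integrable (F k) (volume.restrict (Ioc 0 t)) :=
    (intervalIntegrable_rpow_sub_mul_rpow hα (by positivity) ht).1.const_mul _
  have hF_norm (k : ℕ) : ∀ τ ∈ Ioc 0 t, ‖F k τ‖ =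
      |μ| ^ k / Gamma (α * k + β) * ((t - τ) ^ (α - 1) * τ ^ (α * k + β - 1)) := by
    intro τ hτ
    have hK : 0 ≤ (t - τ) ^ (α - 1) * τ ^ (α * k + β - 1) :=
      mul_nonneg (rpow_nonneg (sub_nonneg.2 hτ.2) _) (rpow_nonneg hτ.1.le _)
    simp only [F]
    rw [norm_mul, norm_of_nonneg hK, norm_div, norm_pow,
      norm_of_nonneg (Gamma_pos_of_pos (by positivity)).le, Real.norm_eq_abs]
  have hF_sum : Summable fun k ↦ ∫ τ in Ioc 0 t, ‖F k τ‖ := by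
    simp_rw [setIntegral_congr_fun measurableSet_Ioc (hF_norm _), ← integral_of_le ht.le,
      integral_rpow_sub_mul_rpow_mittagLeffler_term hα hβ ht]
    exact (summable_pow_div_Gamma_mul_add hα _ _).mul_left _
  have hseries : ∀ τ ∈ Ioc 0 t,
      (t - τ) ^ (α - 1) * (τ ^ (β - 1) * mittagLeffler α β (μ * τ ^ α))
        = ∑' k, F k τ := by
    intro τ hτ
    refine (((hasSum_mittagLeffler hα β _).mul_left _).mul_left _).tsum_eq.symm.trans
      (tsum_congr fun k ↦ ?_)
    simp only [F]
    rw [show α * k + β - 1 = α * k + (β - 1) by ring, rpow_mul_natCast_add hτ.1, mul_pow]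
    ring
  have hF_hasSum := hasSum_integral_of_summable_integral_norm hF_int hF_sum
  rw [← setIntegral_congr_fun measurableSet_Ioc hseries, ← integral_of_le ht.le] at hF_hasSum
  simp_rw [← integral_of_le ht.le, F,
    integral_rpow_sub_mul_rpow_mittagLeffler_term hα hβ ht] at hF_hasSum
  exact hF_hasSum.unique ((hasSum_mittagLeffler hα _ _).mul_left _)

end RiemannLiouville

theorem RL_integral_mittagLeffler_shift_general (α δ lam t : ℝ) (hα : 0 < α) (hδ : 0 ≤ δ)
    (ht : 0 < t) :
    lam * ((1 / Real.Gamma α) *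
        ∫ τ in (0:ℝ)..t,
          (t - τ) ^ (α - 1) * (τ ^ (α + δ - 1) * mittagLeffler α (α + δ) (-(lam * τ ^ α))))
      = t ^ (α + δ - 1) * ((Real.Gamma (α + δ))⁻¹ - mittagLeffler α (α + δ) (-(lam * t ^ α))) := by
  have hΓα : Gamma α ≠ 0 := (Gamma_pos_of_pos hα).ne'
  simp only [← neg_mul]
  rw [integral_rpow_sub_mul_rpow_mul_mittagLeffler hα (by positivity) ht,
    mittagLeffler_eq_inv_Gamma_add_mul hα (α + δ) (-lam * t ^ α),
    show α + (α + δ) - 1 = α + (α + δ - 1) by ring, rpow_add ht]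
  field_simp
  ring

/-- For `α > 0`, `δ ≥ 0`, `λ > 0` and `t > 0`,
`λ (1/Γ(α)) ∫₀ᵗ (t−τ)^{α−1} τ^{α+δ−1} E_{α,α+δ}(−λ τ^α) dτ
  = t^{α+δ−1} (Γ(α+δ)⁻¹ − E_{α,α+δ}(−λ t^α))`. -/
theorem RL_integral_mittagLeffler_shift (α δ lam t : ℝ) (hα : 0 < α) (hδ : 0 ≤ δ)
    (hlam : 0 < lam) (ht : 0 < t) :
    lam * ((1 / Real.Gamma α) *
        ∫ τ in (0:ℝ)..t,
          (t - τ) ^ (α - 1) * (τ ^ (α + δ - 1) * mittagLeffler α (α + δ) (-(lam * τ ^ α))))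
      = t ^ (α + δ - 1) * ((Real.Gamma (α + δ))⁻¹ - mittagLeffler α (α + δ) (-(lam * t ^ α))) :=
  RL_integral_mittagLeffler_shift_general α δ lam t hα hδ ht
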